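/- arXiv:2311.02680 — 7 statements merged into one kernel-verified Lean document; each statement's English description precedes it below -/
import Mathlib

section
/- Let v be a nonnegative integrable random variable on a probability space with P(v > x) > 0 for all x ≥ 0, and let F̄(x) = P(v > x). If F̄ is rapidly varying with index −∞, then the function G defined by G(x) = ∫_x^∞ F̄(y) dy satisfies 0 < G(x) < ∞ for every x ≥ 0, and G is rapidly varying with index −∞, i.e., for every t > 1, lim_{x→∞} G(tx)/G(x) = 0. -/
open MeasureTheory Filter Set
open scoped Topology

/-!
The layer-cake formula gives `∫₀^∞ F̄ = E v < ∞`, so `G` is finite; it is positive because `F̄`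
is. For `t > 1` the substitution `y ↦ t y` gives `G (t x) = t ∫_x^∞ F̄ (t y) dy`; once `x` is so
large that `F̄ (t y) ≤ ε F̄ y` for all `y ≥ x`, this is at most `t ε G x`.
-/

def IsRapidlyVarying (g : ℝ → ℝ) : Prop :=
  ∀ t : ℝ, 1 < t → Tendsto (fun x => g (t * x) / g x) atTop (𝓝 0)

section Tail

variable {Ω : Type*} [MeasurableSpace Ω] {μ : Measure Ω} [IsFiniteMeasure μ] {v : Ω → ℝ}

lemma antitone_measure_lt_toReal : Antitone fun x : ℝ => (μ {ω | x < v ω}).toReal :=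
  fun _ _ hab => ENNReal.toReal_mono (measure_ne_top μ _)
    (measure_mono fun _ h => hab.trans_lt h)

lemma integrableOn_measure_lt_toReal_Ioi (hv : Integrable v μ) (hv0 : 0 ≤ᵐ[μ] v) :
    IntegrableOn (fun x : ℝ => (μ {ω | x < v ω}).toReal) (Ioi 0) := by
  refine ⟨antitone_measure_lt_toReal.measurable.aestronglyMeasurable, ?_⟩
  rw [hasFiniteIntegral_iff_ofReal (ae_of_all _ fun _ => ENNReal.toReal_nonneg)]
  simp_rw [ENNReal.ofReal_toReal (measure_ne_top μ _)]
  rw [← lintegral_eq_lintegral_meas_lt μ hv0 hv.aemeasurable,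
    ← hasFiniteIntegral_iff_ofReal hv0]
  exact hv.hasFiniteIntegral

end Tail

section IntegralIoi

variable {f : ℝ → ℝ}

lemma integral_Ioi_pos {x : ℝ} (hf : ∀ y > x, 0 < f y) (hint : IntegrableOn f (Ioi x)) :
    0 < ∫ y in Ioi x, f y := by
  have hsupp : Ioi x ⊆ Function.support f := fun y hy => (hf y hy).ne'
  rw [setIntegral_pos_iff_support_of_nonneg_ae
    ((ae_restrict_iff' measurableSet_Ioi).2 (ae_of_all _ fun y hy => (hf y hy).le)) hint,
    inter_eq_right.2 hsupp]
  simp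

lemma integral_Ioi_mul_le {t c x : ℝ} (ht : 0 < t) (hint : IntegrableOn f (Ioi x))
    (hint' : IntegrableOn f (Ioi (t * x))) (hle : ∀ y > x, f (t * y) ≤ c * f y) :
    ∫ y in Ioi (t * x), f y ≤ t * c * ∫ y in Ioi x, f y := by
  rw [← integral_comp_mul_left_Ioi' f x ht, smul_eq_mul, mul_assoc]
  refine mul_le_mul_of_nonneg_left ?_ ht.le
  rw [← integral_const_mul]
  exact setIntegral_mono_on ((integrableOn_Ioi_comp_mul_left_iff f x ht).2 hint')
    (hint.const_mul c) measurableSet_Ioi hle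

theorem IsRapidlyVarying.integral_Ioi (hf : IsRapidlyVarying f)
    (hpos : ∀ᶠ x in atTop, 0 < f x) (hint : ∀ᶠ x in atTop, IntegrableOn f (Ioi x)) :
    IsRapidlyVarying fun x => ∫ y in Ioi x, f y := by
  intro t ht
  have ht0 : 0 < t := by linarith
  have hmul : Tendsto (fun x => t * x) atTop atTop := tendsto_id.const_mul_atTop ht0
  have hGpos : ∀ᶠ x in atTop, 0 < ∫ y in Ioi x, f y := by
    filter_upwards [eventually_forall_ge_atTop.2 hpos, hint] with x hx hIx
    exact integral_Ioi_pos (fun y hy => hx y hy.le) hIx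
  refine tendsto_order.2 ⟨fun a ha => ?_, fun ε hε => ?_⟩
  · filter_upwards [hGpos, hmul.eventually hGpos] with x hx htx
    exact ha.trans (div_pos htx hx)
  have hc : 0 < ε / (2 * t) := by positivity
  have hsmall : ∀ᶠ y in atTop, f (t * y) ≤ ε / (2 * t) * f y := by
    filter_upwards [(hf t ht).eventually (eventually_lt_nhds hc), hpos] with y hy hfy
    exact ((div_lt_iff₀ hfy).1 hy).le
  filter_upwards [eventually_forall_ge_atTop.2 hsmall, hint, hmul.eventually hint, hGpos]
    with x hx hIx hItx hGx
  rw [div_lt_iff₀ hGx]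
  calc ∫ y in Ioi (t * x), f y ≤ t * (ε / (2 * t)) * ∫ y in Ioi x, f y :=
        integral_Ioi_mul_le ht0 hIx hItx fun y hy => hx y hy.le
    _ = ε / 2 * ∫ y in Ioi x, f y := by field_simp
    _ < ε * ∫ y in Ioi x, f y := by linarith [mul_pos hε hGx]

end IntegralIoi

theorem stmt0_general {Ω : Type*} [MeasurableSpace Ω] (μ : Measure Ω) [IsProbabilityMeasure μ]
    (v : Ω → ℝ) (hv : Integrable v μ) (hv0 : ∀ ω, 0 ≤ v ω)
    (Fbar : ℝ → ℝ) (hFbar : ∀ x, Fbar x = (μ {ω | x < v ω}).toReal)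
    (hpos : ∀ x : ℝ, 0 ≤ x → 0 < Fbar x)
    (hrv : ∀ t : ℝ, 1 < t → Tendsto (fun x => Fbar (t * x) / Fbar x) atTop (nhds 0))
    (G : ℝ → ℝ) (hG : ∀ x, G x = ∫ y in Set.Ioi x, Fbar y) :
    (∀ x : ℝ, 0 ≤ x → (0 < G x ∧ IntegrableOn Fbar (Set.Ioi x) volume)) ∧
      (∀ t : ℝ, 1 < t → Tendsto (fun x => G (t * x) / G x) atTop (nhds 0)) := by
  obtain rfl : Fbar = _ := funext hFbar
  obtain rfl : G = _ := funext hG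
  have hint : ∀ x : ℝ, 0 ≤ x → IntegrableOn _ (Ioi x) :=
    fun x hx => (integrableOn_measure_lt_toReal_Ioi hv (ae_of_all _ hv0)).mono_set
      (Ioi_subset_Ioi hx)
  refine ⟨fun x hx => ⟨integral_Ioi_pos (fun y hy => hpos y (hx.trans hy.le)) (hint x hx),
    hint x hx⟩, ?_⟩
  exact IsRapidlyVarying.integral_Ioi hrv (eventually_ge_atTop 0 |>.mono hpos)
    (eventually_ge_atTop 0 |>.mono hint)

/-- Let `v` be a nonnegative integrable random variable with `P(v > x) > 0` for all `x ≥ 0`,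
and let `F̄ x = P(v > x)`.  If `F̄` is rapidly varying with index `-∞`, then
`G x = ∫_x^∞ F̄ y dy` satisfies `0 < G x < ∞` for every `x ≥ 0`, and `G` is rapidly
varying with index `-∞`. -/
theorem stmt0 {Ω : Type*} [MeasurableSpace Ω] (μ : Measure Ω) [IsProbabilityMeasure μ]
    (v : Ω → ℝ) (hvm : Measurable v) (hv : Integrable v μ) (hv0 : ∀ ω, 0 ≤ v ω)
    (Fbar : ℝ → ℝ) (hFbar : ∀ x, Fbar x = (μ {ω | x < v ω}).toReal)
    (hpos : ∀ x : ℝ, 0 ≤ x → 0 < Fbar x)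
    (hrv : ∀ t : ℝ, 1 < t → Tendsto (fun x => Fbar (t * x) / Fbar x) atTop (nhds 0))
    (G : ℝ → ℝ) (hG : ∀ x, G x = ∫ y in Set.Ioi x, Fbar y) :
    (∀ x : ℝ, 0 ≤ x → (0 < G x ∧ IntegrableOn Fbar (Set.Ioi x) volume)) ∧
      (∀ t : ℝ, 1 < t → Tendsto (fun x => G (t * x) / G x) atTop (nhds 0)) :=
  stmt0_general μ v hv hv0 Fbar hFbar hpos hrv G hG
end

section
/- Let v be a nonnegative integrable random variable on a probability space with P(v > x) > 0 for all x ≥ 0, and let F̄(x) = P(v > x). If F̄ is rapidly varying with index −∞, then H(x) = E[v·1_{v>x}] is rapidly varying with index −∞ (i.e., for every t > 1, lim_{x→∞} H(tx)/H(x) = 0), and consequently S(x) = 1/E[v·1_{v>x}] satisfies lim_{x→∞} S(tx)/S(x) = ∞ for every t > 1. -/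
open MeasureTheory Filter Set

/-!
By the layer cake formula, `H x = ∫_{s > 0} F̄ (max x s) ds`. Substituting `s = t u` gives
`H (t x) = t ∫_{u > 0} F̄ (t · max x u) du`, and once `F̄ (t u) ≤ ε F̄ u` for all `u ≥ x`
this is at most `t ε H x`. As `ε` is arbitrary, `H (t x) / H x → 0`, and `S = 1 / H`.
-/

theorem integrableOn_Ioi_measureReal_lt {α : Type*} [MeasurableSpace α] {μ : Measure α}
    {f : α → ℝ} (hf : Integrable f μ) (hf0 : 0 ≤ᵐ[μ] f) :
    IntegrableOn (fun t => μ.real {a | t < f a}) (Ioi 0) := by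
  have hfin : ∫⁻ t in Ioi 0, μ {a | t < f a} ≠ ⊤ := by
    rw [← lintegral_eq_lintegral_meas_lt μ hf0 hf.aemeasurable]
    exact hf.lintegral_lt_top.ne
  have hanti : Antitone fun t => μ {a | t < f a} :=
    fun _ _ hst => measure_mono fun _ h => lt_of_le_of_lt hst h
  exact integrable_toReal_of_lintegral_ne_top hanti.measurable.aemeasurable hfin

theorem setOf_lt_indicator_eq {Ω : Type*} {v : Ω → ℝ} {x s : ℝ} (hs : 0 < s) :
    {ω | s < {ω | x < v ω}.indicator v ω} = {ω | max x s < v ω} := by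
  ext ω
  by_cases h : x < v ω <;> simp [h, hs.le]

section TruncatedMean

variable {Ω : Type*} [MeasurableSpace Ω] {μ : Measure Ω} {v : Ω → ℝ} {x : ℝ}

noncomputable def truncMean (μ : Measure Ω) (v : Ω → ℝ) (x : ℝ) : ℝ :=
  ∫ ω, {ω | x < v ω}.indicator v ω ∂μ

theorem truncMean_eq_integral_Ioi (hvm : Measurable v) (hv : Integrable v μ)
    (hx : 0 ≤ x) :
    truncMean μ v x = ∫ s in Ioi 0, μ.real {ω | max x s < v ω} := by
  rw [truncMean, (hv.indicator (measurableSet_lt measurable_const hvm)).integral_eq_integral_meas_lt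
    (ae_of_all _ (indicator_nonneg fun _ hω => hx.trans hω.le))]
  exact setIntegral_congr_fun measurableSet_Ioi fun s hs => by
    rw [setOf_lt_indicator_eq (mem_Ioi.1 hs)]

theorem integrableOn_Ioi_measureReal_max_lt (hvm : Measurable v) (hv : Integrable v μ)
    (hx : 0 ≤ x) :
    IntegrableOn (fun s => μ.real {ω | max x s < v ω}) (Ioi 0) :=
  (integrableOn_Ioi_measureReal_lt (hv.indicator (measurableSet_lt measurable_const hvm))
    (ae_of_all _ (indicator_nonneg fun _ hω => hx.trans hω.le))).congr_fun
    (fun _ hs => congrArg μ.real (setOf_lt_indicator_eq (mem_Ioi.1 hs))) measurableSet_Ioi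

theorem truncMean_pos (hvm : Measurable v) (hv : Integrable v μ) (hx : 0 ≤ x)
    (hμ : 0 < μ.real {ω | x < v ω}) :
    0 < truncMean μ v x := by
  rw [truncMean, integral_pos_iff_support_of_nonneg (f := {ω | x < v ω}.indicator v)
    (indicator_nonneg fun _ hω => hx.trans hω.le)
    (hv.indicator (measurableSet_lt measurable_const hvm))]
  refine (ENNReal.toReal_pos_iff.1 hμ).1.trans_le (measure_mono fun ω hω => ?_)
  rw [Function.mem_support, indicator_of_mem hω]
  exact (hx.trans_lt hω).ne'

theorem truncMean_mul_le (hvm : Measurable v) (hv : Integrable v μ) (hx : 0 ≤ x)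
    {t ε : ℝ} (ht : 0 < t)
    (hF : ∀ u, x ≤ u → μ.real {ω | t * u < v ω} ≤ ε * μ.real {ω | u < v ω}) :
    truncMean μ v (t * x) ≤ t * ε * truncMean μ v x := by
  have hsubst := integral_comp_mul_left_Ioi' (fun s => μ.real {ω | max (t * x) s < v ω}) 0 ht
  rw [mul_zero, smul_eq_mul] at hsubst
  calc truncMean μ v (t * x)
      = t * ∫ u in Ioi 0, μ.real {ω | t * max x u < v ω} := by
        rw [truncMean_eq_integral_Ioi hvm hv (by positivity), ← hsubst]
        simp_rw [mul_max_of_nonneg _ _ ht.le]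
    _ ≤ t * ∫ u in Ioi 0, ε * μ.real {ω | max x u < v ω} := by
        refine mul_le_mul_of_nonneg_left ?_ ht.le
        exact integral_mono_of_nonneg (ae_of_all _ fun _ => measureReal_nonneg)
          ((integrableOn_Ioi_measureReal_max_lt hvm hv hx).const_mul ε)
          (ae_of_all _ fun u => hF _ (le_max_left _ _))
    _ = t * ε * truncMean μ v x := by
        rw [integral_const_mul, truncMean_eq_integral_Ioi hvm hv hx, mul_assoc]

theorem tendsto_truncMean_mul_div (hvm : Measurable v) (hv : Integrable v μ)
    (hpos : ∀ x : ℝ, 0 ≤ x → 0 < μ.real {ω | x < v ω}) {t : ℝ} (ht : 0 < t)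
    (hrv : Tendsto (fun x => μ.real {ω | t * x < v ω} / μ.real {ω | x < v ω}) atTop
      (nhds 0)) :
    Tendsto (fun x => truncMean μ v (t * x) / truncMean μ v x) atTop (nhds 0) := by
  have hpos_mean : ∀ x, 0 ≤ x → 0 < truncMean μ v x :=
    fun x hx => truncMean_pos hvm hv hx (hpos x hx)
  refine tendsto_order.2 ⟨fun a ha => ?_, fun b hb => ?_⟩
  · filter_upwards [eventually_ge_atTop 0] with x hx
    exact ha.trans (div_pos (hpos_mean _ (by positivity)) (hpos_mean x hx))
  · have hε : 0 < b / (2 * t) := by positivity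
    obtain ⟨x₀, hx₀⟩ := eventually_atTop.1 (hrv.eventually_lt_const hε)
    filter_upwards [eventually_ge_atTop (max x₀ 0)] with x hx
    have hx0 : 0 ≤ x := (le_max_right _ _).trans hx
    have hF : ∀ u, x ≤ u →
        μ.real {ω | t * u < v ω} ≤ b / (2 * t) * μ.real {ω | u < v ω} :=
      fun u hu => ((div_lt_iff₀ (hpos u (hx0.trans hu))).1
        (hx₀ u ((le_max_left _ _).trans (hx.trans hu)))).le
    calc truncMean μ v (t * x) / truncMean μ v x
        ≤ t * (b / (2 * t)) :=
          (div_le_iff₀ (hpos_mean x hx0)).2 (truncMean_mul_le hvm hv hx0 ht hF)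
      _ < b := by field_simp; linarith

end TruncatedMean

theorem stmt1_general {Ω : Type*} [MeasurableSpace Ω] (μ : Measure Ω)
    (v : Ω → ℝ) (hvm : Measurable v) (hv : Integrable v μ)
    (Fbar : ℝ → ℝ) (hFbar : ∀ x, Fbar x = (μ {ω | x < v ω}).toReal)
    (hpos : ∀ x : ℝ, 0 ≤ x → 0 < Fbar x)
    (hrv : ∀ t : ℝ, 1 < t → Tendsto (fun x => Fbar (t * x) / Fbar x) atTop (nhds 0))
    (H : ℝ → ℝ) (hH : ∀ x, H x = ∫ ω, Set.indicator {ω | x < v ω} v ω ∂μ)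
    (S : ℝ → ℝ) (hS : ∀ x, S x = 1 / H x) :
    (∀ t : ℝ, 1 < t → Tendsto (fun x => H (t * x) / H x) atTop (nhds 0)) ∧
      (∀ t : ℝ, 1 < t → Tendsto (fun x => S (t * x) / S x) atTop atTop) := by
  obtain rfl : Fbar = fun x => μ.real {ω | x < v ω} := funext hFbar
  obtain rfl : H = truncMean μ v := funext hH
  have hratio : ∀ t : ℝ, 1 < t →
      Tendsto (fun x => truncMean μ v (t * x) / truncMean μ v x) atTop (nhds 0) :=
    fun t ht => tendsto_truncMean_mul_div hvm hv hpos (by positivity) (hrv t ht)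
  refine ⟨hratio, fun t ht => ?_⟩
  have hratio_pos : ∀ᶠ x in atTop, 0 < truncMean μ v (t * x) / truncMean μ v x := by
    filter_upwards [eventually_ge_atTop 0] with x hx
    exact div_pos (truncMean_pos hvm hv (by positivity) (hpos _ (by positivity)))
      (truncMean_pos hvm hv hx (hpos x hx))
  refine (tendsto_nhdsWithin_of_tendsto_nhds_of_eventually_within _ (hratio t ht) hratio_pos)
    |>.inv_tendsto_nhdsGT_zero.congr fun x => ?_
  rw [Pi.inv_apply, hS, hS, inv_div, one_div, one_div, div_inv_eq_mul, inv_mul_eq_div]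

/-- If the tail `F̄ x = P(v > x)` of a nonnegative integrable random variable `v` with
`P(v > x) > 0` for all `x ≥ 0` is rapidly varying with index `-∞`, then
`H x = E[v · 1_{v > x}]` is rapidly varying with index `-∞` and consequently
`S x = 1 / H x` satisfies `S (t x) / S x → ∞` for every `t > 1`. -/
theorem stmt1 {Ω : Type*} [MeasurableSpace Ω] (μ : Measure Ω) [IsProbabilityMeasure μ]
    (v : Ω → ℝ) (hvm : Measurable v) (hv : Integrable v μ) (hv0 : ∀ ω, 0 ≤ v ω)
    (Fbar : ℝ → ℝ) (hFbar : ∀ x, Fbar x = (μ {ω | x < v ω}).toReal)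
    (hpos : ∀ x : ℝ, 0 ≤ x → 0 < Fbar x)
    (hrv : ∀ t : ℝ, 1 < t → Tendsto (fun x => Fbar (t * x) / Fbar x) atTop (nhds 0))
    (H : ℝ → ℝ) (hH : ∀ x, H x = ∫ ω, Set.indicator {ω | x < v ω} v ω ∂μ)
    (S : ℝ → ℝ) (hS : ∀ x, S x = 1 / H x) :
    (∀ t : ℝ, 1 < t → Tendsto (fun x => H (t * x) / H x) atTop (nhds 0)) ∧
      (∀ t : ℝ, 1 < t → Tendsto (fun x => S (t * x) / S x) atTop atTop) :=
  stmt1_general μ v hvm hv Fbar hFbar hpos hrv H hH S hS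
end

section
/- If f : (0,∞) → (0,∞) is Borel measurable and slowly varying, then for every γ > 0, lim_{x→∞} f(x)/x^γ = 0. -/
/-!
Put `h u = log f(eᵘ)`. Slow variation of `f` says `h (u + s) - h u → 0` for each fixed `s`, and
since `h` is measurable this convergence is uniform for `s ∈ [0, 1]` (the uniform convergence
theorem, proved with Egorov's theorem and a measure-counting argument). Summing unit increments,
`h u ≤ C + (γ / 2) u` for large `u`, so `f x / x ^ γ = exp (h (log x) - γ log x) → 0`.
-/

open Filter MeasureTheory Set Topology

section UniformConvergence

variable {h : ℝ → ℝ}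

lemma exists_measure_le_eventually_abs_sub_lt (hm : Measurable h)
    (hc : ∀ s, Tendsto (fun u => h (u + s) - h u) atTop (𝓝 0))
    {y : ℕ → ℝ} (hy : Tendsto y atTop atTop) (a b : ℝ) {η δ : ℝ} (hη : 0 < η) (hδ : 0 < δ) :
    ∃ T, volume T ≤ ENNReal.ofReal η ∧
      ∀ᶠ m in atTop, ∀ u ∈ Icc a b \ T, |h (y m + u) - h (y m)| < δ := by
  obtain ⟨T, -, -, hTη, hunif⟩ := tendstoUniformlyOn_of_ae_tendsto
    (f := fun m u => h (y m + u) - h (y m)) (g := fun _ => 0) (μ := volume)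
    (fun m => ((hm.comp (measurable_const_add _)).sub_const _).stronglyMeasurable)
    stronglyMeasurable_const measurableSet_Icc measure_Icc_lt_top.ne
    (ae_of_all _ fun u _ => (hc u).comp hy) hη
  refine ⟨T, hTη, ?_⟩
  filter_upwards [Metric.tendstoUniformlyOn_iff.mp hunif δ hδ] with m hm u hu
  rw [abs_sub_comm]
  simpa [Real.dist_eq] using hm u hu

theorem eventually_forall_Icc_abs_sub_le (hm : Measurable h)
    (hc : ∀ s, Tendsto (fun u => h (u + s) - h u) atTop (𝓝 0)) {ε : ℝ} (hε : 0 < ε) :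
    ∀ᶠ x in atTop, ∀ t ∈ Icc (0 : ℝ) 1, |h (x + t) - h x| ≤ ε := by
  by_contra hbad
  obtain ⟨x, hx, hbad⟩ := exists_seq_forall_of_frequently (not_eventually.mp hbad)
  push Not at hbad
  choose t ht hlarge using hbad
  have hxt : Tendsto (fun m => x m + t m) atTop atTop :=
    hx.atTop_add_nonneg fun m => (ht m).1
  obtain ⟨T, hT, hTev⟩ :=
    exists_measure_le_eventually_abs_sub_lt hm hc hx 0 2 (by norm_num : (0 : ℝ) < 1 / 3)
      (half_pos hε)
  obtain ⟨T', hT', hT'ev⟩ :=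
    exists_measure_le_eventually_abs_sub_lt hm hc hxt 0 1 (by norm_num : (0 : ℝ) < 1 / 3)
      (half_pos hε)
  obtain ⟨m, hTm, hT'm⟩ := (hTev.and hT'ev).exists
  -- `[t m, t m + 1]` has measure `1`, too much to be covered by `T` and a translate of `T'`
  obtain ⟨u, hu, huT⟩ :
      (Icc (t m) (t m + 1) \ (T ∪ (fun v => v + -t m) ⁻¹' T')).Nonempty := by
    refine sdiff_nonempty.mpr fun hsub => ?_
    have hcover := (measure_mono hsub).trans (measure_union_le (μ := volume) _ _)
    rw [measure_preimage_add_right, Real.volume_Icc, add_sub_cancel_left] at hcover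
    have hsmall := (hcover.trans (add_le_add hT hT')).trans_eq
      (ENNReal.ofReal_add (by norm_num) (by norm_num)).symm
    norm_num at hsmall
  rw [mem_union, not_or] at huT
  have h₁ := hTm u ⟨⟨(ht m).1.trans hu.1, by linarith [(ht m).2, hu.2]⟩, huT.1⟩
  have h₂ := hT'm (u + -t m) ⟨⟨by linarith [hu.1], by linarith [hu.2]⟩, huT.2⟩
  rw [show x m + t m + (u + -t m) = x m + u by ring] at h₂
  rw [abs_lt] at h₁ h₂
  rcases lt_abs.mp (hlarge m) with hlarge | hlarge <;> linarith

end UniformConvergence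

theorem le_add_mul_of_forall_Icc_sub_le {h : ℝ → ℝ} {X c : ℝ}
    (hinc : ∀ x ≥ X, ∀ t ∈ Icc (0 : ℝ) 1, h (x + t) - h x ≤ c) {u : ℝ} (hu : X ≤ u) :
    h u ≤ h X + c * (u - X + 1) := by
  have hc : 0 ≤ c := by simpa using hinc X le_rfl 0 ⟨le_rfl, zero_le_one⟩
  have hstep : ∀ n : ℕ, ∀ t ∈ Icc (0 : ℝ) 1, h (X + n + t) ≤ h X + c * (n + 1) := by
    intro n
    induction n with
    | zero =>
      intro t ht
      have := hinc X le_rfl t ht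
      simp only [Nat.cast_zero, add_zero, zero_add, mul_one]
      linarith
    | succ n ih =>
      intro t ht
      have hprev := ih 1 ⟨zero_le_one, le_rfl⟩
      have hlast := hinc (X + n + 1) (by linarith [n.cast_nonneg (α := ℝ)]) t ht
      push_cast
      rw [← add_assoc X]
      linarith
  set n := ⌊u - X⌋₊
  have hn : (n : ℝ) ≤ u - X := Nat.floor_le (sub_nonneg.mpr hu)
  have hbound := hstep n (u - X - n)
    ⟨sub_nonneg.mpr hn, by linarith [Nat.lt_floor_add_one (u - X)]⟩
  rw [show X + n + (u - X - n) = u by ring] at hbound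
  linarith [mul_le_mul_of_nonneg_left (by linarith : (n : ℝ) + 1 ≤ u - X + 1) hc]

theorem tendsto_log_comp_exp_add_sub_of_slowlyVarying {f : ℝ → ℝ} (hpos : ∀ x, 0 < x → 0 < f x)
    (hsv : ∀ t, 0 < t → Tendsto (fun x => f (t * x) / f x) atTop (𝓝 1)) (s : ℝ) :
    Tendsto (fun u => Real.log (f (Real.exp (u + s))) - Real.log (f (Real.exp u))) atTop (𝓝 0) := by
  have hratio := (hsv (Real.exp s) (Real.exp_pos s)).comp Real.tendsto_exp_atTop
  have hlog := (Real.continuousAt_log one_ne_zero).tendsto.comp hratio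
  rw [Real.log_one] at hlog
  refine hlog.congr fun u => ?_
  simp only [Function.comp_apply]
  rw [Real.log_div (hpos _ (by positivity)).ne' (hpos _ (Real.exp_pos u)).ne', ← Real.exp_add,
    add_comm s]

/-- A Borel measurable, slowly varying function `f : (0,∞) → (0,∞)` satisfies
`f x / x ^ γ → 0` as `x → ∞`, for every `γ > 0`. -/
theorem stmt3 (f : ℝ → ℝ) (hmeas : Measurable f) (hpos : ∀ x : ℝ, 0 < x → 0 < f x)
    (hsv : ∀ t : ℝ, 0 < t → Tendsto (fun x => f (t * x) / f x) atTop (nhds 1)) :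
    ∀ γ : ℝ, 0 < γ → Tendsto (fun x => f x / x ^ γ) atTop (nhds 0) := by
  intro γ hγ
  set h : ℝ → ℝ := fun u => Real.log (f (Real.exp u))
  have hm : Measurable h := Real.measurable_log.comp (hmeas.comp Real.measurable_exp)
  obtain ⟨X, hX⟩ := eventually_atTop.mp <| eventually_forall_Icc_abs_sub_le hm
    (tendsto_log_comp_exp_add_sub_of_slowlyVarying hpos hsv) (half_pos hγ)
  have hdecay : Tendsto (fun u => h u - γ * u) atTop atBot := by
    refine tendsto_atBot_mono' atTop ?_ (tendsto_atBot_add_const_left atTop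
      (h X + γ / 2 * (1 - X)) (tendsto_id.const_mul_atTop_of_neg (by linarith : -(γ / 2) < 0)))
    filter_upwards [eventually_ge_atTop X] with u hu
    have := le_add_mul_of_forall_Icc_sub_le (fun x hx t ht => (abs_le.mp (hX x hx t ht)).2) hu
    simp only [id]
    linarith
  refine ((Real.tendsto_exp_atBot.comp hdecay).comp Real.tendsto_log_atTop).congr' ?_
  filter_upwards [eventually_gt_atTop 0] with x hx
  simp only [Function.comp_apply, h, Real.exp_sub, Real.exp_log hx, Real.exp_log (hpos x hx),
    Real.rpow_def_of_pos hx, mul_comm γ]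
end

section
/- Let f : [0,∞) → (0,∞) be nondecreasing, unbounded, and rapidly varying with index ∞ (i.e., lim_{x→∞} f(tx)/f(x) = ∞ for every t > 1). Define f⁻¹(y) = inf{x ≥ 0 : f(x) > y}. Then f⁻¹ is slowly varying; that is, for every t > 0, lim_{y→∞} f⁻¹(ty)/f⁻¹(y) = 1. -/
open Filter Topology

/-!
Fix `s > 1` and `t ≥ 1`. Rapid variation gives `t * f x ≤ f (s * x)` for all large `x`, so once
`f⁻¹ y` is large, every `x > f⁻¹ y` has `t * y < t * f x ≤ f (s * x)`, i.e. `f⁻¹ (t * y) ≤ s * x`.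
Hence `1 ≤ f⁻¹ (t * y) / f⁻¹ y ≤ s` eventually, for every `s > 1`; the case `t < 1` follows by
passing to reciprocals.
-/

theorem tendsto_comp_mul_div_of_one_le {g : ℝ → ℝ}
    (h : ∀ t : ℝ, 1 ≤ t → Tendsto (fun y => g (t * y) / g y) atTop (𝓝 1)) {t : ℝ} (ht : 0 < t) :
    Tendsto (fun y => g (t * y) / g y) atTop (𝓝 1) := by
  rcases le_or_gt 1 t with h1 | h1
  · exact h t h1
  have hinv := ((h t⁻¹ ((one_le_inv₀ ht).2 h1.le)).comp
    (tendsto_id.const_mul_atTop ht)).inv₀ one_ne_zero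
  rw [inv_one] at hinv
  refine hinv.congr fun y => ?_
  simp only [Function.comp_apply, id, inv_div, inv_mul_cancel_left₀ ht.ne']

noncomputable def genInv (f : ℝ → ℝ) (y : ℝ) : ℝ :=
  sInf {x : ℝ | 0 ≤ x ∧ y < f x}

section genInv

variable {f : ℝ → ℝ}

theorem genInv_le {x y : ℝ} (hx : 0 ≤ x) (hy : y < f x) : genInv f y ≤ x :=
  csInf_le ⟨0, fun _ hz => hz.1⟩ ⟨hx, hy⟩

theorem lt_apply_of_genInv_lt (hmono : MonotoneOn f (Set.Ici 0))
    (hunb : ∀ y : ℝ, ∃ x : ℝ, 0 ≤ x ∧ y < f x) {x y : ℝ}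
    (hx : 0 ≤ x) (hlt : genInv f y < x) : y < f x := by
  obtain ⟨z, ⟨hz, hyz⟩, hzx⟩ := (csInf_lt_iff ⟨0, fun _ hz => hz.1⟩ (hunb y)).1 hlt
  exact hyz.trans_le (hmono hz hx hzx.le)

theorem le_genInv (hmono : MonotoneOn f (Set.Ici 0))
    (hunb : ∀ y : ℝ, ∃ x : ℝ, 0 ≤ x ∧ y < f x) {x y : ℝ}
    (hx : 0 ≤ x) (hy : f x ≤ y) : x ≤ genInv f y := by
  refine le_csInf (hunb y) fun z ⟨hz, hyz⟩ => ?_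
  by_contra! hzx
  exact (hyz.trans_le (hmono hz hx hzx.le)).not_ge hy

theorem genInv_mono (hunb : ∀ y : ℝ, ∃ x : ℝ, 0 ≤ x ∧ y < f x) :
    Monotone (genInv f) := fun _ y' hy =>
  csInf_le_csInf ⟨0, fun _ hz => hz.1⟩ (hunb y') fun _ ⟨hz, hyz⟩ => ⟨hz, hy.trans_lt hyz⟩

theorem tendsto_genInv_atTop (hmono : MonotoneOn f (Set.Ici 0))
    (hunb : ∀ y : ℝ, ∃ x : ℝ, 0 ≤ x ∧ y < f x) :
    Tendsto (genInv f) atTop atTop :=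
  tendsto_atTop_atTop.2 fun X =>
    ⟨f (max X 0), fun _ hy => (le_max_left X 0).trans (le_genInv hmono hunb (le_max_right X 0) hy)⟩

theorem genInv_mul_le_mul_genInv (hmono : MonotoneOn f (Set.Ici 0))
    (hunb : ∀ y : ℝ, ∃ x : ℝ, 0 ≤ x ∧ y < f x) {s t X y : ℝ}
    (hs : 0 < s) (ht : 0 < t) (hX : 0 ≤ X)
    (hgrowth : ∀ x, X ≤ x → t * f x ≤ f (s * x)) (hy : f X ≤ y) :
    genInv f (t * y) ≤ s * genInv f y := by
  rw [← div_le_iff₀' hs]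
  refine le_of_forall_gt_imp_ge_of_dense fun x hx => ?_
  have hXx : X ≤ x := (le_genInv hmono hunb hX hy).trans hx.le
  have hty : t * y < f (s * x) :=
    (mul_lt_mul_of_pos_left (lt_apply_of_genInv_lt hmono hunb (hX.trans hXx) hx) ht).trans_le
      (hgrowth x hXx)
  rw [div_le_iff₀' hs]
  exact genInv_le (mul_nonneg hs.le (hX.trans hXx)) hty

theorem tendsto_genInv_mul_div_genInv (hmono : MonotoneOn f (Set.Ici 0))
    (hunb : ∀ y : ℝ, ∃ x : ℝ, 0 ≤ x ∧ y < f x)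
    (hpos : ∀ x : ℝ, 0 ≤ x → 0 < f x)
    (hrv : ∀ s : ℝ, 1 < s → Tendsto (fun x => f (s * x) / f x) atTop atTop) {t : ℝ} (ht : 1 ≤ t) :
    Tendsto (fun y => genInv f (t * y) / genInv f y) atTop (𝓝 1) := by
  have hgpos : ∀ᶠ y in atTop, 0 < genInv f y :=
    (tendsto_genInv_atTop hmono hunb).eventually_gt_atTop 0
  have hge : ∀ᶠ y in atTop, 1 ≤ genInv f (t * y) / genInv f y := by
    filter_upwards [hgpos, eventually_ge_atTop 0] with y hy hy0
    exact (one_le_div hy).2 (genInv_mono hunb (le_mul_of_one_le_left hy0 ht))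
  refine tendsto_order.2 ⟨fun a ha => hge.mono fun y hy => ha.trans_le hy, fun b hb => ?_⟩
  obtain ⟨s, hs, hsb⟩ := exists_between hb
  have hgrowth : ∀ᶠ x in atTop, t * f x ≤ f (s * x) := by
    filter_upwards [(hrv s hs).eventually_ge_atTop t, eventually_ge_atTop 0] with x hx hx0
    exact (le_div_iff₀ (hpos x hx0)).1 hx
  obtain ⟨X, hX⟩ := eventually_atTop.1 hgrowth
  have hX' : ∀ x, max X 0 ≤ x → t * f x ≤ f (s * x) := fun x hx => hX x ((le_max_left _ _).trans hx)
  filter_upwards [hgpos, eventually_ge_atTop (f (max X 0))] with y hy hXy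
  rw [div_lt_iff₀ hy]
  exact (genInv_mul_le_mul_genInv hmono hunb (by linarith) (by linarith) (le_max_right X 0) hX'
    hXy).trans_lt (mul_lt_mul_of_pos_right hsb hy)

end genInv

/-- If `f : [0,∞) → (0,∞)` is nondecreasing, unbounded and rapidly varying with index `∞`,
then its right-continuous generalized inverse `f⁻¹ y = inf {x ≥ 0 : f x > y}` is slowly
varying. -/
theorem stmt4 (f : ℝ → ℝ) (hpos : ∀ x : ℝ, 0 ≤ x → 0 < f x)
    (hmono : MonotoneOn f (Set.Ici (0 : ℝ)))
    (hunb : ∀ M : ℝ, ∃ x : ℝ, 0 ≤ x ∧ M < f x)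
    (hrv : ∀ t : ℝ, 1 < t → Tendsto (fun x => f (t * x) / f x) atTop atTop)
    (finv : ℝ → ℝ) (hfinv : ∀ y, finv y = sInf {x : ℝ | 0 ≤ x ∧ y < f x}) :
    ∀ t : ℝ, 0 < t → Tendsto (fun y => finv (t * y) / finv y) atTop (nhds 1) := by
  obtain rfl : finv = genInv f := funext hfinv
  exact fun t ht => tendsto_comp_mul_div_of_one_le
    (fun t ht => tendsto_genInv_mul_div_genInv hmono hunb hpos hrv ht) ht
end

section
/- Let v be a positive random variable with continuous cumulative distribution function, E[v²] < ∞, and P(v > x) > 0 for all x ≥ 0, whose tail F̄(x) = P(v > x) is rapidly varying with index −∞ (lim_{x→∞} F̄(tx)/F̄(x) = 0 for all t > 1). Set λ = 1/E[v], S(x) = 1/E[v·1_{v>x}], S⁻¹(r) = inf{x ≥ 0 : S(x) > r}, and c^r = S⁻¹(r). Let (r_n) be a strictly increasing sequence with r_n > λ and r_n → ∞, and for each n let λ^{r_n} > 0 be such that r_n·(λ^{r_n}·E[v] − 1) → κ for some κ ∈ ℝ. Define ρ^{r_n}_x = λ^{r_n}·E[v·1_{v≤x}]. Then as n → ∞: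 (i) for every a ∈ [0,1), r_n·(ρ^{r_n}_{a c^{r_n}} − 1) → −∞; (ii) for a = 1, r_n·(ρ^{r_n}_{c^{r_n}} − 1) → κ − λ; (iii) for every a > 1, r_n·(ρ^{r_n}_{a c^{r_n}} − 1) → κ. -/
/-!
Write `F̄(x) = P(v > x)` and `G(x) = E[v; v > x] = 1 / S(x)`. Since `ρ^r_x = λ^r (E v - G(x))`,
`r(ρ^r_x - 1) = r(λ^r E v - 1) - λ^r · r G(x)`, and `λ^r → λ` because `r(λ^r E v - 1)`
converges. Continuity of the distribution function makes `G` continuous, so `G(c^r) = 1/r`;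
thus `c^r → ∞` and `r G(a c^r) = G(a c^r) / G(c^r)`. Finally `G` inherits rapid variation from
`F̄`: `x F̄(x) ≤ G(x)`, and summing over the shells `2^k x < v ≤ 2^(k+1) x`, using
`F̄(2x) ≤ F̄(x)/4` for large `x`, gives `G(x) ≤ 4 x F̄(x)`. Hence `G(a c^r) / G(c^r)` tends to
`∞`, `1` or `0` according as `a < 1`, `a = 1` or `a > 1`.
-/

open MeasureTheory Filter Topology

def RapidlyVarying (g : ℝ → ℝ) : Prop :=
  ∀ t : ℝ, 1 < t → Tendsto (fun x => g (t * x) / g x) atTop (𝓝 0)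

namespace RapidlyVarying

variable {F G : ℝ → ℝ}

lemma eventually_le_four_mul (hF : RapidlyVarying F) (hFpos : ∀ x, 0 ≤ x → 0 < F x)
    (hstep : ∀ x, 0 ≤ x → G x ≤ 2 * x * F x + G (2 * x)) (hG : Tendsto G atTop (𝓝 0)) :
    ∀ᶠ x in atTop, G x ≤ 4 * (x * F x) := by
  obtain ⟨X, hX⟩ := eventually_atTop.1 <|
    ((hF 2 one_lt_two).eventually_lt_const (by norm_num : (0 : ℝ) < 1 / 4)).and
      (eventually_gt_atTop 0)
  have hquarter : ∀ x, X ≤ x → F (2 * x) ≤ F x / 4 := fun x hx => by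
    have h := (hX x hx).1
    rw [div_lt_iff₀ (hFpos x (hX x hx).2.le)] at h
    linarith
  have hshells : ∀ n : ℕ, ∀ x, X ≤ x → G x ≤ 4 * (x * F x) + G (2 ^ n * x) := by
    intro n
    induction n with
    | zero =>
      intro x hx
      have := mul_pos (hX x hx).2 (hFpos x (hX x hx).2.le)
      simp only [pow_zero, one_mul]
      linarith
    | succ n ih =>
      intro x hx
      have hx0 := (hX x hx).2
      have h2x := ih (2 * x) (by linarith)
      have := mul_le_mul_of_nonneg_left (hquarter x hx) (by positivity : (0 : ℝ) ≤ 8 * x)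
      rw [pow_succ, mul_assoc]
      linarith [hstep x hx0.le]
  filter_upwards [eventually_ge_atTop X] with x hx
  have hpow : Tendsto (fun n : ℕ => 2 ^ n * x) atTop atTop :=
    (tendsto_pow_atTop_atTop_of_one_lt one_lt_two).atTop_mul_const (hX x hx).2
  have hlim := (hG.comp hpow).const_add (4 * (x * F x))
  rw [add_zero] at hlim
  exact ge_of_tendsto hlim (Eventually.of_forall fun n => hshells n x hx)

lemma of_le_of_le (hF : RapidlyVarying F) (hFpos : ∀ x, 0 ≤ x → 0 < F x) {C : ℝ}
    (hlow : ∀ x, 0 ≤ x → x * F x ≤ G x) (hup : ∀ᶠ x in atTop, G x ≤ C * (x * F x)) :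
    RapidlyVarying G := by
  intro t ht
  have ht0 : 0 < t := by linarith
  have hbound : Tendsto (fun x => C * t * (F (t * x) / F x)) atTop (𝓝 0) := by
    simpa using (hF t ht).const_mul (C * t)
  have hGpos : ∀ x, 0 < x → 0 < G x := fun x hx =>
    (mul_pos hx (hFpos x hx.le)).trans_le (hlow x hx.le)
  refine squeeze_zero' ?_ ?_ hbound
  · filter_upwards [eventually_gt_atTop 0] with x hx
    exact div_nonneg (hGpos _ (mul_pos ht0 hx)).le (hGpos x hx).le
  · filter_upwards [eventually_gt_atTop 0, (tendsto_id.const_mul_atTop ht0).eventually hup]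
      with x hx hupx
    have hFx := hFpos x hx.le
    calc G (t * x) / G x ≤ C * (t * x * F (t * x)) / (x * F x) :=
          div_le_div₀ (hupx.trans' (hGpos _ (mul_pos ht0 hx)).le) hupx (by positivity)
            (hlow x hx.le)
      _ = C * t * (F (t * x) / F x) := by field_simp

lemma tendsto_apply_mul_div_atTop (hG : RapidlyVarying G) (hanti : Antitone G)
    (hpos : ∀ x, 0 < G x) {a : ℝ} (ha0 : 0 ≤ a) (ha1 : a < 1) :
    Tendsto (fun x => G (a * x) / G x) atTop atTop := by
  obtain ⟨b, hab, hb0, hb1⟩ : ∃ b, a ≤ b ∧ 0 < b ∧ b < 1 :=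
    ⟨(1 + a) / 2, by linarith, by linarith, by linarith⟩
  have hb : Tendsto (fun x => G (b * x) / G x) atTop atTop := by
    have h := (hG b⁻¹ ((one_lt_inv₀ hb0).2 hb1)).comp (tendsto_id.const_mul_atTop hb0)
    have h' : Tendsto (fun x => G x / G (b * x)) atTop (𝓝[>] 0) :=
      tendsto_nhdsWithin_iff.2 ⟨h.congr fun x => by simp [inv_mul_cancel_left₀ hb0.ne'],
        Eventually.of_forall fun x => div_pos (hpos _) (hpos _)⟩
    exact h'.inv_tendsto_nhdsGT_zero.congr fun x => by simp
  refine tendsto_atTop_mono' _ ?_ hb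
  filter_upwards [eventually_ge_atTop 0] with x hx
  exact div_le_div_of_nonneg_right (hanti (mul_le_mul_of_nonneg_right hab hx))
    (hpos x).le

end RapidlyVarying

lemma apply_sInf_setOf_lt_eq {G : ℝ → ℝ} (hG : Continuous G) (hlim : Tendsto G atTop (𝓝 0))
    {y : ℝ} (hy : 0 < y) (hyG : y < G 0) : G (sInf {x | 0 ≤ x ∧ G x < y}) = y := by
  set T := {x | 0 ≤ x ∧ G x < y}
  have hne : T.Nonempty := ((eventually_ge_atTop 0).and (hlim.eventually_lt_const hy)).exists
  have hbdd : BddBelow T := ⟨0, fun x hx => hx.1⟩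
  have hle : G (sInf T) ≤ y :=
    (isClosed_le hG continuous_const).closure_subset_iff.2 (fun x hx => hx.2.le)
      (csInf_mem_closure hne hbdd)
  refine le_antisymm hle (not_lt.1 fun hlt => ?_)
  have hpos : 0 < sInf T := (le_csInf hne fun x hx => hx.1).lt_of_ne <| by
    rintro h
    rw [← h] at hlt
    linarith
  -- `G < y` persists slightly to the left of `sInf T`, producing a smaller element of `T`.
  obtain ⟨x, ⟨hx0, hxG⟩, hxlt⟩ :=
    ((((eventually_gt_nhds hpos).and (hG.continuousAt.eventually_lt_const hlt)).filter_mono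
      nhdsWithin_le_nhds).and (self_mem_nhdsWithin : Set.Iio (sInf T) ∈ 𝓝[<] sInf T)).exists
  exact (csInf_le hbdd ⟨hx0.le, hxG⟩).not_gt hxlt

lemma tendsto_atTop_of_tendsto_comp_nhds_zero {ι : Type*} {l : Filter ι} {G : ℝ → ℝ}
    (hanti : Antitone G) (hpos : ∀ x, 0 < G x) {c : ι → ℝ}
    (hc : Tendsto (fun i => G (c i)) l (𝓝 0)) : Tendsto c l atTop :=
  tendsto_atTop.2 fun M => by
    filter_upwards [hc.eventually_lt_const (hpos M)] with i hi
    exact (hanti.reflect_lt hi).le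

lemma tendsto_nhds_one_div_of_tendsto_mul_mul_sub_one {ι : Type*} {l : Filter ι}
    {r a : ι → ℝ} {m κ : ℝ} (hr : Tendsto r l atTop) (hm : m ≠ 0)
    (h : Tendsto (fun i => r i * (a i * m - 1)) l (𝓝 κ)) : Tendsto a l (𝓝 (1 / m)) := by
  have h1 := ((h.mul hr.inv_tendsto_atTop).add_const 1).div_const m
  rw [mul_zero, zero_add] at h1
  refine h1.congr' ?_
  filter_upwards [hr.eventually_gt_atTop 0] with i hi
  simp only [Pi.inv_apply]
  field_simp
  ring

noncomputable def tailProb {Ω : Type*} [MeasurableSpace Ω] (μ : Measure Ω) (v : Ω → ℝ)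
    (x : ℝ) : ℝ :=
  μ.real {ω | x < v ω}

noncomputable def tailMoment {Ω : Type*} [MeasurableSpace Ω] (μ : Measure Ω) (v : Ω → ℝ)
    (x : ℝ) : ℝ :=
  ∫ ω, {ω | x < v ω}.indicator v ω ∂μ

section Tail

variable {Ω : Type*} [MeasurableSpace Ω] {μ : Measure Ω} {v : Ω → ℝ}

lemma antitone_tailProb [IsFiniteMeasure μ] : Antitone (tailProb μ v) := fun _ _ hxy =>
  measureReal_mono fun _ (h : _ < _) => hxy.trans_lt h

lemma continuous_tailProb [IsProbabilityMeasure μ] (hvm : Measurable v)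
    (hcdf : Continuous fun x => μ.real {ω | v ω ≤ x}) : Continuous (tailProb μ v) := by
  have h : tailProb μ v = fun x => 1 - μ.real {ω | v ω ≤ x} := funext fun x => by
    simpa [tailProb, Set.compl_ofPred] using
      probReal_compl_eq_one_sub (μ := μ)
        (measurableSet_le hvm measurable_const : MeasurableSet {ω | v ω ≤ x})
  rw [h]
  exact continuous_const.sub hcdf

lemma tailMoment_zero (hv : 0 ≤ v) : tailMoment μ v 0 = ∫ ω, v ω ∂μ := by
  refine integral_congr_ae (Eventually.of_forall fun ω => ?_)
  simp only [Set.indicator_apply, Set.mem_ofPred_eq]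
  split_ifs with h
  · rfl
  · exact (le_antisymm (not_lt.1 h) (hv ω)).symm

variable (hvm : Measurable v) (hint : Integrable v μ)
include hvm hint

lemma antitone_tailMoment (hv : 0 ≤ v) : Antitone (tailMoment μ v) := fun _ _ hxy =>
  integral_mono (hint.indicator (measurableSet_lt measurable_const hvm))
    (hint.indicator (measurableSet_lt measurable_const hvm))
    (Set.indicator_le_indicator_of_subset (fun _ (h : _ < _) => hxy.trans_lt h) hv)

lemma mul_tailProb_le_tailMoment [IsFiniteMeasure μ] (x : ℝ) :
    x * tailProb μ v x ≤ tailMoment μ v x := by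
  have h := integral_mono ((integrable_const x).indicator (measurableSet_lt measurable_const hvm))
    (hint.indicator (measurableSet_lt measurable_const hvm)) fun ω => by
      simp only [Set.indicator_apply, Set.mem_ofPred_eq]
      split_ifs with hω <;> linarith
  rwa [integral_indicator_const _ (measurableSet_lt measurable_const hvm), smul_eq_mul,
    mul_comm] at h

lemma tailMoment_sub_le [IsFiniteMeasure μ] {x y : ℝ} (hxy : x ≤ y) :
    tailMoment μ v x - tailMoment μ v y ≤ y * (tailProb μ v x - tailProb μ v y) := by
  have hI := fun z : ℝ => hint.indicator
    (measurableSet_lt measurable_const hvm : MeasurableSet {ω | z < v ω})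
  have hC := fun z : ℝ => (integrable_const (μ := μ) y).indicator
    (measurableSet_lt measurable_const hvm : MeasurableSet {ω | z < v ω})
  have h := integral_mono ((hI x).sub (hI y)) ((hC x).sub (hC y)) fun ω => by
    simp only [Pi.sub_apply, Set.indicator_apply, Set.mem_ofPred_eq]
    split_ifs <;> linarith
  rw [integral_sub' (hI x) (hI y), integral_sub' (hC x) (hC y),
    integral_indicator_const _ (measurableSet_lt measurable_const hvm),
    integral_indicator_const _ (measurableSet_lt measurable_const hvm)] at h
  simp only [smul_eq_mul] at h
  rw [tailMoment, tailMoment, tailProb, tailProb]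
  linarith

lemma abs_tailMoment_sub_le [IsFiniteMeasure μ] (hv : 0 ≤ v) (x y : ℝ) :
    |tailMoment μ v x - tailMoment μ v y| ≤
      max |x| |y| * |tailProb μ v x - tailProb μ v y| := by
  wlog hxy : x ≤ y generalizing x y
  · rw [abs_sub_comm, max_comm, abs_sub_comm (tailProb μ v x)]
    exact this y x (le_of_not_ge hxy)
  have hG := sub_nonneg.2 (antitone_tailMoment hvm hint hv hxy)
  have hF := sub_nonneg.2 (antitone_tailProb (μ := μ) (v := v) hxy)
  rw [abs_of_nonneg hG, abs_of_nonneg hF]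
  exact (tailMoment_sub_le hvm hint hxy).trans
    (mul_le_mul_of_nonneg_right ((le_abs_self y).trans (le_max_right _ _)) hF)

lemma continuous_tailMoment [IsFiniteMeasure μ] (hv : 0 ≤ v)
    (hF : Continuous (tailProb μ v)) : Continuous (tailMoment μ v) := by
  refine continuous_iff_continuousAt.2 fun x₀ => tendsto_iff_dist_tendsto_zero.2 ?_
  have hbound : Continuous fun x => max |x| |x₀| * |tailProb μ v x - tailProb μ v x₀| := by
    fun_prop
  refine squeeze_zero (fun _ => dist_nonneg)
    (fun x => (Real.dist_eq _ _).trans_le (abs_tailMoment_sub_le hvm hint hv x x₀)) ?_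
  simpa using hbound.tendsto x₀

lemma tendsto_tailMoment_atTop : Tendsto (tailMoment μ v) atTop (𝓝 0) := by
  have h := tendsto_integral_filter_of_dominated_convergence (l := atTop)
    (F := fun x ω => {ω | x < v ω}.indicator v ω) (f := 0) (fun ω => |v ω|)
    (Eventually.of_forall fun x =>
      (hint.indicator (measurableSet_lt measurable_const hvm)).aestronglyMeasurable)
    (Eventually.of_forall fun x => Eventually.of_forall fun ω =>
      (norm_indicator_le_norm_self v ω).trans_eq (Real.norm_eq_abs _)) hint.abs
    (Eventually.of_forall fun ω => tendsto_const_nhds.congr' <| by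
      filter_upwards [eventually_ge_atTop (v ω)] with x hx
      exact (Set.indicator_of_notMem (s := {ω | x < v ω}) (not_lt.2 hx) v).symm)
  simp only [Pi.zero_apply, integral_zero] at h
  exact h

lemma tailMoment_pos [IsFiniteMeasure μ] (hv : 0 ≤ v)
    (hpos : ∀ x, 0 ≤ x → 0 < tailProb μ v x) (x : ℝ) : 0 < tailMoment μ v x := by
  have h1 : (0 : ℝ) < max x 1 := lt_max_of_lt_right one_pos
  calc 0 < max x 1 * tailProb μ v (max x 1) := mul_pos h1 (hpos _ h1.le)
    _ ≤ tailMoment μ v (max x 1) := mul_tailProb_le_tailMoment hvm hint _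
    _ ≤ tailMoment μ v x := antitone_tailMoment hvm hint hv (le_max_left _ _)

lemma integral_indicator_le_eq_sub_tailMoment (x : ℝ) :
    ∫ ω, {ω | v ω ≤ x}.indicator v ω ∂μ = ∫ ω, v ω ∂μ - tailMoment μ v x := by
  have h := integral_add_compl
    (measurableSet_le hvm measurable_const : MeasurableSet {ω | v ω ≤ x}) hint
  simp only [Set.compl_ofPred, not_le] at h
  rw [tailMoment, integral_indicator (measurableSet_le hvm measurable_const),
    integral_indicator (measurableSet_lt measurable_const hvm)]
  linarith

lemma rapidlyVarying_tailMoment [IsFiniteMeasure μ]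
    (hpos : ∀ x, 0 ≤ x → 0 < tailProb μ v x) (hF : RapidlyVarying (tailProb μ v)) :
    RapidlyVarying (tailMoment μ v) := by
  refine hF.of_le_of_le (C := 4) hpos (fun x _ => mul_tailProb_le_tailMoment hvm hint x) ?_
  refine hF.eventually_le_four_mul hpos (fun x hx => ?_) (tendsto_tailMoment_atTop hvm hint)
  have h := tailMoment_sub_le hvm hint (by linarith : x ≤ 2 * x)
  have := (hpos (2 * x) (by linarith)).le
  nlinarith

lemma tailMoment_sInf_eq [IsProbabilityMeasure μ] (hv : 0 ≤ v)
    (hcdf : Continuous fun x => μ.real {ω | v ω ≤ x})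
    (hpos : ∀ x, 0 ≤ x → 0 < tailProb μ v x) {r : ℝ} (hr : 1 / ∫ ω, v ω ∂μ < r) :
    tailMoment μ v (sInf {x | 0 ≤ x ∧ r < 1 / tailMoment μ v x}) = 1 / r := by
  have hGpos := tailMoment_pos hvm hint hv hpos
  have hm : 0 < ∫ ω, v ω ∂μ := tailMoment_zero hv ▸ hGpos 0
  have hr0 : 0 < r := (one_div_pos.2 hm).trans hr
  have hset :
      {x | 0 ≤ x ∧ r < 1 / tailMoment μ v x} = {x | 0 ≤ x ∧ tailMoment μ v x < 1 / r} :=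
    Set.ext fun x => and_congr_right fun _ => lt_one_div hr0 (hGpos x)
  rw [hset]
  exact apply_sInf_setOf_lt_eq
    (continuous_tailMoment hvm hint hv (continuous_tailProb hvm hcdf))
    (tendsto_tailMoment_atTop hvm hint) (one_div_pos.2 hr0)
    (tailMoment_zero hv ▸ (one_div_lt hm hr0).1 hr)

end Tail

theorem stmt10_general {Ω : Type*} [MeasurableSpace Ω] (μ : Measure Ω) [IsProbabilityMeasure μ]
    (v : Ω → ℝ) (hvm : Measurable v) (hv0 : ∀ ω, 0 < v ω)
    (hv2 : Integrable (fun ω => (v ω) ^ 2) μ)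
    (hcdf : Continuous (fun x : ℝ => (μ {ω | v ω ≤ x}).toReal))
    (hpos : ∀ x : ℝ, 0 ≤ x → 0 < (μ {ω | x < v ω}).toReal)
    (hrv : ∀ t : ℝ, 1 < t →
      Tendsto (fun x => (μ {ω | t * x < v ω}).toReal / (μ {ω | x < v ω}).toReal)
        atTop (nhds 0))
    (lam : ℝ) (hlam : lam = 1 / ∫ ω, v ω ∂μ)
    (S : ℝ → ℝ) (hS : ∀ x, S x = 1 / ∫ ω, Set.indicator {ω | x < v ω} v ω ∂μ)
    (Sinv : ℝ → ℝ) (hSinv : ∀ r, Sinv r = sInf {x : ℝ | 0 ≤ x ∧ r < S x})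
    (rseq : ℕ → ℝ) (hrgt : ∀ n, lam < rseq n)
    (hrtop : Tendsto rseq atTop atTop)
    (lamr : ℕ → ℝ) (κ : ℝ)
    (hκ : Tendsto (fun n => rseq n * (lamr n * (∫ ω, v ω ∂μ) - 1)) atTop (nhds κ))
    (ρ : ℕ → ℝ → ℝ)
    (hρ : ∀ n x, ρ n x = lamr n * ∫ ω, Set.indicator {ω | v ω ≤ x} v ω ∂μ) :
    (∀ a : ℝ, 0 ≤ a → a < 1 →
        Tendsto (fun n => rseq n * (ρ n (a * Sinv (rseq n)) - 1)) atTop atBot) ∧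
      Tendsto (fun n => rseq n * (ρ n (Sinv (rseq n)) - 1)) atTop (nhds (κ - lam)) ∧
      (∀ a : ℝ, 1 < a →
        Tendsto (fun n => rseq n * (ρ n (a * Sinv (rseq n)) - 1)) atTop (nhds κ)) := by
  have hv : 0 ≤ v := fun ω => (hv0 ω).le
  have hint : Integrable v μ :=
    ((memLp_two_iff_integrable_sq hvm.aestronglyMeasurable).2 hv2).integrable one_le_two
  set G := tailMoment μ v
  set m := ∫ ω, v ω ∂μ
  have hGpos : ∀ x, 0 < G x := tailMoment_pos hvm hint hv hpos
  have hGanti : Antitone G := antitone_tailMoment hvm hint hv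
  have hGrv : RapidlyVarying G := rapidlyVarying_tailMoment hvm hint hpos hrv
  have hm_pos : 0 < m := (tailMoment_zero hv).symm.trans_gt (hGpos 0)
  have hlam_pos : 0 < lam := hlam ▸ one_div_pos.2 hm_pos
  have hGc : ∀ n, G (Sinv (rseq n)) = 1 / rseq n := fun n => by
    rw [hSinv]
    simp only [hS]
    exact tailMoment_sInf_eq hvm hint hv hcdf hpos (hlam ▸ hrgt n)
  have hc : Tendsto (fun n => Sinv (rseq n)) atTop atTop :=
    tendsto_atTop_of_tendsto_comp_nhds_zero hGanti hGpos <|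
      (tendsto_inv_atTop_zero.comp hrtop).congr fun n => by simp [hGc]
  have hlamr : Tendsto lamr atTop (𝓝 lam) :=
    hlam ▸ tendsto_nhds_one_div_of_tendsto_mul_mul_sub_one hrtop hm_pos.ne' hκ
  have hdrift : ∀ n x, rseq n * (ρ n x - 1) =
      rseq n * (lamr n * m - 1) - lamr n * (G x / G (Sinv (rseq n))) := fun n x => by
    rw [hρ, integral_indicator_le_eq_sub_tailMoment hvm hint, hGc]
    field_simp
    ring
  simp only [hdrift]
  refine ⟨fun a ha0 ha1 => ?_, ?_, fun a ha1 => ?_⟩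
  · have hratio := (hGrv.tendsto_apply_mul_div_atTop hGanti hGpos ha0 ha1).comp hc
    exact hκ.add_atBot (tendsto_neg_atTop_atBot.comp (hlamr.pos_mul_atTop hlam_pos hratio))
  · simpa [div_self (hGpos _).ne'] using hκ.sub hlamr
  · simpa using hκ.sub (hlamr.mul ((hGrv a ha1).comp hc))

/-- Limiting behaviour of the drift terms `r(ρ^r_{a c^r} − 1)`: they tend to `−∞` for
`a ∈ [0,1)`, to `κ − λ` for `a = 1`, and to `κ` for `a > 1`. -/
theorem stmt10 {Ω : Type*} [MeasurableSpace Ω] (μ : Measure Ω) [IsProbabilityMeasure μ]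
    (v : Ω → ℝ) (hvm : Measurable v) (hv0 : ∀ ω, 0 < v ω)
    (hv2 : Integrable (fun ω => (v ω) ^ 2) μ)
    (hcdf : Continuous (fun x : ℝ => (μ {ω | v ω ≤ x}).toReal))
    (hpos : ∀ x : ℝ, 0 ≤ x → 0 < (μ {ω | x < v ω}).toReal)
    (hrv : ∀ t : ℝ, 1 < t →
      Tendsto (fun x => (μ {ω | t * x < v ω}).toReal / (μ {ω | x < v ω}).toReal)
        atTop (nhds 0))
    (lam : ℝ) (hlam : lam = 1 / ∫ ω, v ω ∂μ)
    (S : ℝ → ℝ) (hS : ∀ x, S x = 1 / ∫ ω, Set.indicator {ω | x < v ω} v ω ∂μ)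
    (Sinv : ℝ → ℝ) (hSinv : ∀ r, Sinv r = sInf {x : ℝ | 0 ≤ x ∧ r < S x})
    (rseq : ℕ → ℝ) (hrmono : StrictMono rseq) (hrgt : ∀ n, lam < rseq n)
    (hrtop : Tendsto rseq atTop atTop)
    (lamr : ℕ → ℝ) (hlamr : ∀ n, 0 < lamr n) (κ : ℝ)
    (hκ : Tendsto (fun n => rseq n * (lamr n * (∫ ω, v ω ∂μ) - 1)) atTop (nhds κ))
    (ρ : ℕ → ℝ → ℝ)
    (hρ : ∀ n x, ρ n x = lamr n * ∫ ω, Set.indicator {ω | v ω ≤ x} v ω ∂μ) :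
    (∀ a : ℝ, 0 ≤ a → a < 1 →
        Tendsto (fun n => rseq n * (ρ n (a * Sinv (rseq n)) - 1)) atTop atBot) ∧
      Tendsto (fun n => rseq n * (ρ n (Sinv (rseq n)) - 1)) atTop (nhds (κ - lam)) ∧
      (∀ a : ℝ, 1 < a →
        Tendsto (fun n => rseq n * (ρ n (a * Sinv (rseq n)) - 1)) atTop (nhds κ)) :=
  stmt10_general μ v hvm hv0 hv2 hcdf hpos hrv lam hlam S hS Sinv hSinv rseq hrgt hrtop lamr κ hκ ρ
    hρ
end

section
/- Let f₁, f₂ : [0,∞) → ℝ be bounded on every compact interval with 0 ≤ f₁(0) ≤ f₂(0), and suppose that f₁(t) − f₁(s) ≤ f₂(t) − f₂(s) for all 0 ≤ s ≤ t < ∞. Then Γ[f₁](t) ≤ Γ[f₂](t) for all t ≥ 0, where Γ is the one-dimensional Skorokhod map. -/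
open Filter Set

/-- The one-dimensional Skorokhod map: `Γ[f](t) = f t − inf_{0 ≤ s ≤ t} (f s ∧ 0)`. -/
noncomputable def skorokhodMap (f : ℝ → ℝ) (t : ℝ) : ℝ :=
  f t - sInf ((fun s => min (f s) 0) '' Set.Icc 0 t)

/-- Monotonicity property of the one-dimensional Skorokhod map. -/
theorem stmt12 (f₁ f₂ : ℝ → ℝ)
    (hb₁ : ∀ T : ℝ, ∃ M : ℝ, ∀ t ∈ Set.Icc (0 : ℝ) T, |f₁ t| ≤ M)
    (hb₂ : ∀ T : ℝ, ∃ M : ℝ, ∀ t ∈ Set.Icc (0 : ℝ) T, |f₂ t| ≤ M)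
    (h₁0 : 0 ≤ f₁ 0) (h₀₁ : f₁ 0 ≤ f₂ 0)
    (hincr : ∀ s t : ℝ, 0 ≤ s → s ≤ t → f₁ t - f₁ s ≤ f₂ t - f₂ s) :
    ∀ t : ℝ, 0 ≤ t → skorokhodMap f₁ t ≤ skorokhodMap f₂ t := by
  intro t ht
  unfold skorokhodMap
  set S₁ := (fun s => min (f₁ s) 0) '' Set.Icc 0 t with hS₁
  set S₂ := (fun s => min (f₂ s) 0) '' Set.Icc 0 t with hS₂
  have hne : (Set.Icc (0:ℝ) t).Nonempty := ⟨0, le_refl 0, ht⟩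
  obtain ⟨M₂, hM₂⟩ := hb₂ t
  have hbdd₂ : BddBelow S₂ := by
    refine ⟨-M₂, ?_⟩
    rintro x ⟨s, hs, rfl⟩
    have h := abs_le.mp (hM₂ s hs)
    have h0 : -M₂ ≤ 0 := by
      have := abs_le.mp (hM₂ 0 ⟨le_rfl, ht⟩)
      have := abs_nonneg (f₂ 0)
      have := hM₂ 0 ⟨le_rfl, ht⟩
      linarith [abs_nonneg (f₂ 0)]
    exact le_min h.1 h0
  have hD : 0 ≤ f₂ t - f₁ t := by
    have h := hincr 0 t le_rfl ht; linarith
  have key : sInf S₂ - (f₂ t - f₁ t) ≤ sInf S₁ := by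
    apply le_csInf (hne.image _)
    rintro x ⟨s, hs, rfl⟩
    have h2 := hincr s t hs.1 hs.2
    have hle2 : sInf S₂ ≤ min (f₂ s) 0 := csInf_le hbdd₂ ⟨s, hs, rfl⟩
    have hle0 : sInf S₂ ≤ min (f₂ 0) 0 := csInf_le hbdd₂ ⟨0, ⟨le_rfl, ht⟩, rfl⟩
    rcases le_or_gt 0 (f₁ s) with h | h
    · have hm : min (f₁ s) 0 = 0 := min_eq_right h
      have h00 : min (f₂ 0) 0 ≤ 0 := min_le_right _ _
      linarith
    · have hm : min (f₁ s) 0 = f₁ s := min_eq_left h.le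
      have hms : min (f₂ s) 0 ≤ f₂ s := min_le_left _ _
      linarith
  linarith
end

section
/- Let f : [0,∞) → ℝ be bounded on every compact interval with f(0) ≥ 0, and let Γ denote the one-dimensional Skorokhod map. Then for all t, s ≥ 0: Γ[f](s + t) = Γ[ g ](t), where g : [0,∞) → ℝ is defined by g(u) = Γ[f](s) + f(u + s) − f(s). -/
open Filter Set

lemma sInf_image_sub_const (S : Set ℝ) (hS : S.Nonempty) (hbd : BddBelow S) (c : ℝ) :
    sInf ((fun x => x - c) '' S) = sInf S - c := by
  refine IsGLB.csInf_eq ⟨?_, ?_⟩ (hS.image _)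
  · rintro y ⟨x, hx, rfl⟩
    exact sub_le_sub_right (csInf_le hbd hx) c
  · intro b hbnd
    have h : b + c ≤ sInf S := le_csInf hS fun x hx => by
      have := hbnd ⟨x, hx, rfl⟩; simp at this; linarith
    linarith

/-- Shift property of the one-dimensional Skorokhod map:
`Γ[f](s + t) = Γ[Γ[f](s) + f(· + s) − f(s)](t)`. -/
theorem stmt13 (f : ℝ → ℝ)
    (hb : ∀ T : ℝ, ∃ M : ℝ, ∀ t ∈ Set.Icc (0 : ℝ) T, |f t| ≤ M)
    (h0 : 0 ≤ f 0) :
    ∀ s t : ℝ, 0 ≤ s → 0 ≤ t →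
      skorokhodMap f (s + t)
        = skorokhodMap (fun u => skorokhodMap f s + f (u + s) - f s) t := by
  intro s t hs ht
  set A := sInf ((fun u => min (f u) 0) '' Set.Icc 0 s) with hA
  obtain ⟨M, hM⟩ := hb (s + t)
  -- basic facts
  have hne1 : ((fun u => min (f u) 0) '' Set.Icc 0 s).Nonempty :=
    ⟨min (f 0) 0, ⟨0, ⟨le_refl 0, hs⟩, rfl⟩⟩
  have hbd1 : BddBelow ((fun u => min (f u) 0) '' Set.Icc 0 s) := by
    refine ⟨-(max M 0), ?_⟩
    rintro y ⟨x, hx, rfl⟩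
    have hx' : x ∈ Set.Icc (0:ℝ) (s + t) := ⟨hx.1, hx.2.trans (by linarith)⟩
    have := hM x hx'
    have h1 : -(max M 0) ≤ f x := by
      have := abs_le.mp this; have := le_max_left M 0; linarith
    exact le_min h1 (neg_nonpos.mpr (le_max_right M 0))
  have hAle0 : A ≤ 0 := by
    have : A ≤ min (f 0) 0 := csInf_le hbd1 ⟨0, ⟨le_refl 0, hs⟩, rfl⟩
    exact this.trans (min_le_right _ _)
  have hAle : ∀ r ∈ Set.Icc (0:ℝ) s, A ≤ min (f r) 0 := fun r hr =>
    csInf_le hbd1 ⟨r, hr, rfl⟩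
  -- abbreviations
  set S1 := (fun r => min (f r) 0) '' Set.Icc 0 (s + t) with hS1
  set S2 := (fun u => min (f (u + s)) A) '' Set.Icc 0 t with hS2
  have hne2 : S1.Nonempty := ⟨min (f 0) 0, ⟨0, ⟨le_refl 0, by linarith⟩, rfl⟩⟩
  have hbd2 : BddBelow S1 := by
    refine ⟨-(max M 0), ?_⟩
    rintro y ⟨x, hx, rfl⟩
    have := hM x hx
    have h1 : -(max M 0) ≤ f x := by
      have := abs_le.mp this; have := le_max_left M 0; linarith
    exact le_min h1 (neg_nonpos.mpr (le_max_right M 0))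
  have hne3 : S2.Nonempty := ⟨min (f (0 + s)) A, ⟨0, ⟨le_refl 0, ht⟩, rfl⟩⟩
  have hbd3 : BddBelow S2 := by
    refine ⟨min (-(max M 0)) A, ?_⟩
    rintro y ⟨x, hx, rfl⟩
    have hx' : x + s ∈ Set.Icc (0:ℝ) (s + t) := ⟨by linarith [hx.1], by linarith [hx.2]⟩
    have := hM (x + s) hx'
    have h1 : -(max M 0) ≤ f (x + s) := by
      have := abs_le.mp this; have := le_max_left M 0; linarith
    exact le_min ((min_le_left _ _).trans h1) (min_le_right _ _)
  -- key equality of infima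
  have key : sInf S2 = sInf S1 := by
    apply le_antisymm
    · -- sInf S2 ≤ sInf S1
      refine le_csInf hne2 ?_
      rintro y ⟨r, hr, rfl⟩
      have hS2A : sInf S2 ≤ A := by
        have : sInf S2 ≤ min (f (0 + s)) A := csInf_le hbd3 ⟨0, ⟨le_refl 0, ht⟩, rfl⟩
        exact this.trans (min_le_right _ _)
      by_cases hrs : r ≤ s
      · exact hS2A.trans (hAle r ⟨hr.1, hrs⟩)
      · push_neg at hrs
        have hmem : r - s ∈ Set.Icc (0:ℝ) t := ⟨by linarith, by linarith [hr.2]⟩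
        have h1 : sInf S2 ≤ min (f (r - s + s)) A := csInf_le hbd3 ⟨r - s, hmem, rfl⟩
        have h2 : r - s + s = r := by ring
        rw [h2] at h1
        exact le_min (h1.trans (min_le_left _ _)) (hS2A.trans hAle0)
    · -- sInf S1 ≤ sInf S2
      refine le_csInf hne3 ?_
      rintro y ⟨u, hu, rfl⟩
      have hS1A : sInf S1 ≤ A := by
        refine le_csInf hne1 ?_
        rintro y ⟨r, hr, rfl⟩
        exact csInf_le hbd2 ⟨r, ⟨hr.1, hr.2.trans (by linarith)⟩, rfl⟩
      have h1 : sInf S1 ≤ min (f (u + s)) 0 :=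
        csInf_le hbd2 ⟨u + s, ⟨by linarith [hu.1], by linarith [hu.2]⟩, rfl⟩
      exact le_min ((h1.trans (min_le_left _ _))) hS1A
  -- rewrite g
  have hg : (fun u => min (skorokhodMap f s + f (u + s) - f s) 0) =
      (fun u => min (f (u + s)) A - A) := by
    funext u
    have : skorokhodMap f s + f (u + s) - f s = f (u + s) - A := by
      simp only [skorokhodMap, ← hA]; ring
    rw [this, show (0:ℝ) = A - A by ring, min_sub_sub_right]
  show f (s + t) - sInf S1 = skorokhodMap f s + f (t + s) - f s -
      sInf ((fun u => min (skorokhodMap f s + f (u + s) - f s) 0) '' Set.Icc 0 t)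
  rw [hg]
  have himg : (fun u => min (f (u + s)) A - A) '' Set.Icc 0 t = (fun x => x - A) '' S2 := by
    rw [hS2, Set.image_image]
  rw [himg, sInf_image_sub_const S2 hne3 hbd3 A, key]
  have : skorokhodMap f s + f (t + s) - f s = f (t + s) - A := by
    simp only [skorokhodMap, ← hA]; ring
  rw [this, show t + s = s + t by ring]
  ring
end
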